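/- arXiv:1703.05911 — 3 statements merged into one kernel-verified Lean document; each statement's English description precedes it below -/
import Mathlib

section
/- Let R be a commutative ring and let b, c, c', d ∈ R satisfy b² = 1, d·c' = b·c'², and d² = c·c'. Then for all natural numbers i, j, k there exist ε, δ ∈ {0, 1} and m, r ∈ ℕ with r ≤ 2 and δ·r = 0 such that bⁱ·dʲ·c'ᵏ = b^ε·d^δ·cᵐ·c'ʳ. (This makes precise the paper's claim that in the normal form of any value of the invariant F, the exponents of d and b are at most 1 and the exponent of c' is at most 2, with d and c' never occurring together.) -/
/-- In a commutative ring with `b^2 = 1`, `d * c' = b * c'^2` and `d^2 = c * c'`,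
every monomial `b^i * d^j * c'^k` can be rewritten in the normal form
`b^ε * d^δ * c^m * c'^r` with `ε, δ ∈ {0,1}`, `r ≤ 2` and `δ * r = 0`. -/
theorem normal_form_exists {R : Type*} [CommRing R] (b c c' d : R)
    (hb : b ^ 2 = 1) (hdc : d * c' = b * c' ^ 2) (hdd : d ^ 2 = c * c')
    (i j k : ℕ) :
    ∃ ε δ m r : ℕ, ε ≤ 1 ∧ δ ≤ 1 ∧ r ≤ 2 ∧ δ * r = 0 ∧
      b ^ i * d ^ j * c' ^ k = b ^ ε * d ^ δ * c ^ m * c' ^ r := by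
  have hbi : ∀ n : ℕ, b ^ n = b ^ (n % 2) := fun n => by
    conv_lhs => rw [← Nat.div_add_mod n 2, pow_add, pow_mul, hb, one_pow, one_mul]
  have hdj : ∀ n : ℕ, d ^ n = d ^ (n % 2) * c ^ (n / 2) * c' ^ (n / 2) := fun n => by
    conv_lhs => rw [← Nat.div_add_mod n 2, pow_add, pow_mul, hdd, mul_pow]
    ring
  have hc3 : c' ^ 3 = c * c' ^ 2 := by
    have h1 : d ^ 2 * c' = c * c' ^ 2 := by rw [hdd]; ring
    have h2 : d ^ 2 * c' = c' ^ 3 := by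
      have e1 : d ^ 2 * c' = d * (d * c') := by ring
      rw [e1, hdc]
      have e2 : d * (b * c' ^ 2) = b * (d * c') * c' := by ring
      rw [e2, hdc]
      have e3 : b * (b * c' ^ 2) * c' = b ^ 2 * c' ^ 3 := by ring
      rw [e3, hb, one_mul]
    rw [← h2, h1]
  have hck : ∀ n : ℕ, c' ^ (n + 2) = c ^ n * c' ^ 2 := by
    intro n
    induction n with
    | zero => simp
    | succ m ih =>
      have e1 : c' ^ (m + 1 + 2) = c' ^ (m + 2) * c' := by ring
      rw [e1, ih]
      calc c ^ m * c' ^ 2 * c' = c ^ m * c' ^ 3 := by ring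
        _ = c ^ m * (c * c' ^ 2) := by rw [hc3]
        _ = c ^ (m + 1) * c' ^ 2 := by ring
  have hnorm : ∀ K : ℕ, ∃ m r : ℕ, r ≤ 2 ∧ c' ^ K = c ^ m * c' ^ r := by
    intro K
    match K with
    | 0 => exact ⟨0, 0, by norm_num, by simp⟩
    | 1 => exact ⟨0, 1, by norm_num, by simp⟩
    | n + 2 => exact ⟨n, 2, le_refl 2, hck n⟩
  have hd1 : ∀ t : ℕ, d * c' ^ (t + 1) = b * c' ^ (t + 2) := by
    intro t
    have e1 : d * c' ^ (t + 1) = (d * c') * c' ^ t := by ring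
    rw [e1, hdc]; ring
  have hi1 : i % 2 ≤ 1 := Nat.le_of_lt_succ (Nat.mod_lt i (by norm_num))
  rw [hbi i, hdj j]
  rcases Nat.mod_two_eq_zero_or_one j with h | h <;> rw [h]
  · -- j even
    obtain ⟨m, r, hr, he⟩ := hnorm (j / 2 + k)
    refine ⟨i % 2, 0, j / 2 + m, r, hi1, by norm_num, hr, by norm_num, ?_⟩
    have e1 : b ^ (i % 2) * (d ^ 0 * c ^ (j / 2) * c' ^ (j / 2)) * c' ^ k
        = b ^ (i % 2) * d ^ 0 * c ^ (j / 2) * c' ^ (j / 2 + k) := by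
      rw [pow_add]; ring
    rw [e1, he, pow_add]; ring
  · -- j odd
    cases hK : j / 2 + k with
    | zero =>
      obtain ⟨h1, h2⟩ := Nat.add_eq_zero.mp hK
      refine ⟨i % 2, 1, 0, 0, hi1, le_refl 1, by norm_num, by norm_num, ?_⟩
      rw [h1, h2]; ring
    | succ t =>
      refine ⟨(i % 2 + 1) % 2, 0, j / 2 + t, 2,
        Nat.le_of_lt_succ (Nat.mod_lt _ (by norm_num)), by norm_num, le_refl 2,
        by norm_num, ?_⟩
      have e1 : b ^ (i % 2) * (d ^ 1 * c ^ (j / 2) * c' ^ (j / 2)) * c' ^ k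
          = b ^ (i % 2) * c ^ (j / 2) * (d * c' ^ (t + 1)) := by
        rw [← hK, pow_add]; ring
      rw [e1, hd1 t, hck t]
      have e2 : b ^ ((i % 2 + 1) % 2) = b ^ (i % 2) * b := by
        rw [← hbi (i % 2 + 1), pow_succ]
      rw [e2, pow_add, pow_zero]; ring
end

section
/- The one-step monomial reduction relation of rewriting system (4) terminates: there is no infinite sequence m₀ → m₁ → m₂ → ⋯ of one-step reductions of monomials; equivalently, the relation (fun m' m => m → m') on multisets over G is well-founded. -/
/-- The generators: six symbols `A, A⁻¹, b, c, c', d` together with a symbol `vₙ`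
for each positive integer `n`. -/
inductive Gen : Type
  | A : Gen
  | Ainv : Gen
  | b : Gen
  | c : Gen
  | c' : Gen
  | d : Gen
  | v : ℕ+ → Gen
  deriving DecidableEq

open Gen in
/-- The rewriting rules of system (4): `dc' → bc'c'`, `bb → 1`, `dd → cc'`,
`AA⁻¹ → 1`, `c'c'c' → cc'c'`, and `c v_{n+1} → A vₙ`, `c v_{n+1} → A⁻¹ b vₙ`,
`c v_{n+1} → d vₙ` for each `n ≥ 1`. -/
def IsRule4 (L R : Multiset Gen) : Prop :=
  (L = {d, c'} ∧ R = {b, c', c'}) ∨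
  (L = {b, b} ∧ R = 0) ∨
  (L = {d, d} ∧ R = {c, c'}) ∨
  (L = {A, Ainv} ∧ R = 0) ∨
  (L = {c', c', c'} ∧ R = {c, c', c'}) ∨
  (∃ n : ℕ+, L = {c, v (n + 1)} ∧
    (R = {A, v n} ∨ R = {Ainv, b, v n} ∨ R = {d, v n}))

/-- One-step reduction of monomials (finite multisets of generators): replace an
occurrence of a left-hand side of a rule by the corresponding right-hand side. -/
def Step4 (m m' : Multiset Gen) : Prop :=
  ∃ L R s : Multiset Gen, IsRule4 L R ∧ m = L + s ∧ m' = R + s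

open Gen in
/-- Weight function making every rule of system (4) strictly decreasing. -/
def wt4 : Gen → ℕ
  | A => 1
  | Ainv => 1
  | b => 1
  | c => 1
  | c' => 2
  | d => 4
  | v n => 4 * (n : ℕ)

theorem step4_lt {m m' : Multiset Gen} (h : Step4 m m') :
    (m'.map wt4).sum < (m.map wt4).sum := by
  obtain ⟨L, R, s, hrule, hm, hm'⟩ := h
  subst hm hm'
  simp only [Multiset.map_add, Multiset.sum_add]
  have key : (R.map wt4).sum < (L.map wt4).sum := by
    rcases hrule with ⟨hL, hR⟩ | ⟨hL, hR⟩ | ⟨hL, hR⟩ | ⟨hL, hR⟩ | ⟨hL, hR⟩ |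
      ⟨n, hL, hR | hR | hR⟩ <;> subst hL <;> subst hR <;>
      simp [wt4, Multiset.insert_eq_cons] <;> omega
  omega

/-- The rewriting system (4) terminates: the one-step reduction relation on
monomials is well-founded (there is no infinite chain of reductions). -/
theorem system4_terminates :
    WellFounded (fun m' m : Multiset Gen => Step4 m m') := by
  have hw : WellFounded (InvImage Nat.lt fun m : Multiset Gen => (m.map wt4).sum) :=
    InvImage.wf _ Nat.lt_wfRel.wf
  exact Subrelation.wf (fun h => step4_lt h) hw
end

section
/- Let Q be the quotient of the polynomial ring ℤ[x_A, x_{A'}, x_b, x_c, x_{c'}, x_d] in six variables by the ideal generated by x_A·x_{A'} − 1, x_b² − 1, x_d·x_{c'} − x_b·x_{c'}², and x_d² − x_c·x_{c'}. Then Q is spanned as a ℤ-module by the images of the monomials x_A^s·x_{A'}^t·x_b^ε·x_d^δ·x_c^m·x_{c'}^r with s, t, m ∈ ℕ, ε, δ ∈ {0, 1}, r ≤ 2, δ·r = 0 and s·t = 0. (These are the normal-form monomials of the paper's rewriting system (4) restricted to the variables A, A⁻¹, b, c, c', d.) -/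
open MvPolynomial

/-- Indices of the six variables `x_A, x_{A'}, x_b, x_c, x_{c'}, x_d`. -/
inductive Var : Type
  | A : Var
  | A' : Var
  | b : Var
  | c : Var
  | c' : Var
  | d : Var
  deriving DecidableEq

open Var in
/-- The ideal of `ℤ[x_A, x_{A'}, x_b, x_c, x_{c'}, x_d]` generated by
`x_A x_{A'} - 1`, `x_b² - 1`, `x_d x_{c'} - x_b x_{c'}²`, `x_d² - x_c x_{c'}`. -/
noncomputable def relIdeal : Ideal (MvPolynomial Var ℤ) :=
  Ideal.span {X A * X A' - 1, X b ^ 2 - 1,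
    X d * X c' - X b * X c' ^ 2, X d ^ 2 - X c * X c'}

open Var in
/-- The images in the quotient ring of the normal-form monomials
`x_A^s x_{A'}^t x_b^ε x_d^δ x_c^m x_{c'}^r` with `ε, δ ∈ {0,1}`, `r ≤ 2`,
`δr = 0`, `st = 0`. -/
def normalMonomials : Set (MvPolynomial Var ℤ ⧸ relIdeal) :=
  { q | ∃ s t m ε δ r : ℕ, ε ≤ 1 ∧ δ ≤ 1 ∧ r ≤ 2 ∧ δ * r = 0 ∧ s * t = 0 ∧
      q = Ideal.Quotient.mk relIdeal
        (X A ^ s * X A' ^ t * X b ^ ε * X d ^ δ * X c ^ m * X c' ^ r) }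

noncomputable def g (v : Var) : MvPolynomial Var ℤ ⧸ relIdeal :=
  Ideal.Quotient.mk relIdeal (X v)

open Var

lemma rel_eq_zero {p : MvPolynomial Var ℤ}
    (h : p ∈ ({X A * X A' - 1, X b ^ 2 - 1,
      X d * X c' - X b * X c' ^ 2, X d ^ 2 - X c * X c'} : Set (MvPolynomial Var ℤ))) :
    Ideal.Quotient.mk relIdeal p = 0 :=
  Ideal.Quotient.eq_zero_iff_mem.2 (Ideal.subset_span h)

lemma rAA : g A * g A' = 1 := by
  have h := rel_eq_zero (p := X A * X A' - 1) (by simp)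
  rw [map_sub, map_mul, map_one, sub_eq_zero] at h
  exact h

lemma rb : g b ^ 2 = 1 := by
  have h := rel_eq_zero (p := X b ^ 2 - 1) (by simp)
  rw [map_sub, map_pow, map_one, sub_eq_zero] at h
  exact h

lemma rdc : g d * g c' = g b * g c' ^ 2 := by
  have h := rel_eq_zero (p := X d * X c' - X b * X c' ^ 2) (by simp)
  rw [map_sub, map_mul, map_mul, map_pow, sub_eq_zero] at h
  exact h

lemma rdd : g d ^ 2 = g c * g c' := by
  have h := rel_eq_zero (p := X d ^ 2 - X c * X c') (by simp)
  rw [map_sub, map_pow, map_mul, sub_eq_zero] at h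
  exact h

lemma rc3 : g c' ^ 3 = g c * g c' ^ 2 := by
  have h1 : g d ^ 2 * g c' = g c' ^ 3 := by
    calc g d ^ 2 * g c' = g d * (g d * g c') := by ring
      _ = g d * (g b * g c' ^ 2) := by rw [rdc]
      _ = (g d * g c') * (g b * g c') := by ring
      _ = (g b * g c' ^ 2) * (g b * g c') := by rw [rdc]
      _ = g b ^ 2 * g c' ^ 3 := by ring
      _ = 1 * g c' ^ 3 := by rw [rb]
      _ = g c' ^ 3 := by ring
  have h2 : g d ^ 2 * g c' = g c * g c' ^ 2 := by rw [rdd]; ring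
  rw [← h1, h2]

/-- Abbreviation for a normal-form monomial in the quotient. -/
noncomputable def M (s t ε δ m r : ℕ) : MvPolynomial Var ℤ ⧸ relIdeal :=
  g A ^ s * g A' ^ t * g b ^ ε * g d ^ δ * g c ^ m * g c' ^ r

lemma M_mem {s t m ε δ r : ℕ} (hε : ε ≤ 1) (hδ : δ ≤ 1) (hr : r ≤ 2)
    (hδr : δ * r = 0) (hst : s * t = 0) : M s t ε δ m r ∈ normalMonomials :=
  ⟨s, t, m, ε, δ, r, hε, hδ, hr, hδr, hst, by simp [M, g, map_mul, map_pow]⟩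

lemma key (v : Var) {s t m ε δ r : ℕ} (hε : ε ≤ 1) (hδ : δ ≤ 1) (hr : r ≤ 2)
    (hδr : δ * r = 0) (hst : s * t = 0) :
    g v * M s t ε δ m r ∈ normalMonomials := by
  cases v with
  | A =>
    rcases Nat.mul_eq_zero.mp hst with hs | ht
    · subst hs
      cases t with
      | zero =>
        have e : g A * M 0 0 ε δ m r = M 1 0 ε δ m r := by unfold M; ring
        rw [e]; exact M_mem hε hδ hr hδr (by simp)
      | succ t =>
        have e : g A * M 0 (t + 1) ε δ m r = (g A * g A') * M 0 t ε δ m r := by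
          unfold M; ring
        rw [e, rAA, one_mul]; exact M_mem hε hδ hr hδr (by simp)
    · subst ht
      have e : g A * M s 0 ε δ m r = M (s + 1) 0 ε δ m r := by unfold M; ring
      rw [e]; exact M_mem hε hδ hr hδr (by simp)
  | A' =>
    rcases Nat.mul_eq_zero.mp hst with hs | ht
    · subst hs
      have e : g A' * M 0 t ε δ m r = M 0 (t + 1) ε δ m r := by unfold M; ring
      rw [e]; exact M_mem hε hδ hr hδr (by simp)
    · subst ht
      cases s with
      | zero =>
        have e : g A' * M 0 0 ε δ m r = M 0 1 ε δ m r := by unfold M; ring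
        rw [e]; exact M_mem hε hδ hr hδr (by simp)
      | succ s =>
        have e : g A' * M (s + 1) 0 ε δ m r = (g A * g A') * M s 0 ε δ m r := by
          unfold M; ring
        rw [e, rAA, one_mul]; exact M_mem hε hδ hr hδr (by simp)
  | b =>
    interval_cases ε
    · have e : g b * M s t 0 δ m r = M s t 1 δ m r := by unfold M; ring
      rw [e]; exact M_mem (by norm_num) hδ hr hδr hst
    · have e : g b * M s t 1 δ m r = g b ^ 2 * M s t 0 δ m r := by unfold M; ring
      rw [e, rb, one_mul]; exact M_mem (by norm_num) hδ hr hδr hst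
  | c =>
    have e : g c * M s t ε δ m r = M s t ε δ (m + 1) r := by unfold M; ring
    rw [e]; exact M_mem hε hδ hr hδr hst
  | c' =>
    interval_cases δ
    · interval_cases r
      · have e : g c' * M s t ε 0 m 0 = M s t ε 0 m 1 := by unfold M; ring
        rw [e]; exact M_mem hε (by norm_num) (by norm_num) (by norm_num) hst
      · have e : g c' * M s t ε 0 m 1 = M s t ε 0 m 2 := by unfold M; ring
        rw [e]; exact M_mem hε (by norm_num) (by norm_num) (by norm_num) hst
      · have e : g c' * M s t ε 0 m 2 = g c' ^ 3 * M s t ε 0 m 0 := by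
          unfold M; ring
        have e2 : (g c * g c' ^ 2) * M s t ε 0 m 0 = M s t ε 0 (m + 1) 2 := by
          unfold M; ring
        rw [e, rc3, e2]
        exact M_mem hε (by norm_num) (by norm_num) (by norm_num) hst
    · have hr0 : r = 0 := by simpa using hδr
      subst hr0
      have e : g c' * M s t ε 1 m 0 = (g d * g c') * M s t ε 0 m 0 := by
        unfold M; ring
      rw [e, rdc]
      interval_cases ε
      · have e2 : (g b * g c' ^ 2) * M s t 0 0 m 0 = M s t 1 0 m 2 := by
          unfold M; ring
        rw [e2]; exact M_mem (by norm_num) (by norm_num) (by norm_num) (by norm_num) hst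
      · have e2 : (g b * g c' ^ 2) * M s t 1 0 m 0 = g b ^ 2 * M s t 0 0 m 2 := by
          unfold M; ring
        rw [e2, rb, one_mul]
        exact M_mem (by norm_num) (by norm_num) (by norm_num) (by norm_num) hst
  | d =>
    interval_cases δ
    · interval_cases r
      · have e : g d * M s t ε 0 m 0 = M s t ε 1 m 0 := by unfold M; ring
        rw [e]; exact M_mem hε (by norm_num) (by norm_num) (by norm_num) hst
      · have e : g d * M s t ε 0 m 1 = (g d * g c') * M s t ε 0 m 0 := by
          unfold M; ring
        rw [e, rdc]
        interval_cases ε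
        · have e2 : (g b * g c' ^ 2) * M s t 0 0 m 0 = M s t 1 0 m 2 := by
            unfold M; ring
          rw [e2]; exact M_mem (by norm_num) (by norm_num) (by norm_num) (by norm_num) hst
        · have e2 : (g b * g c' ^ 2) * M s t 1 0 m 0 = g b ^ 2 * M s t 0 0 m 2 := by
            unfold M; ring
          rw [e2, rb, one_mul]
          exact M_mem (by norm_num) (by norm_num) (by norm_num) (by norm_num) hst
      · have e : g d * M s t ε 0 m 2 = (g d * g c') * g c' * M s t ε 0 m 0 := by
          unfold M; ring
        have e3 : (g b * g c' ^ 2) * g c' * M s t ε 0 m 0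
            = g b * g c' ^ 3 * M s t ε 0 m 0 := by ring
        rw [e, rdc, e3, rc3]
        interval_cases ε
        · have e2 : g b * (g c * g c' ^ 2) * M s t 0 0 m 0 = M s t 1 0 (m + 1) 2 := by
            unfold M; ring
          rw [e2]; exact M_mem (by norm_num) (by norm_num) (by norm_num) (by norm_num) hst
        · have e2 : g b * (g c * g c' ^ 2) * M s t 1 0 m 0
              = g b ^ 2 * M s t 0 0 (m + 1) 2 := by unfold M; ring
          rw [e2, rb, one_mul]
          exact M_mem (by norm_num) (by norm_num) (by norm_num) (by norm_num) hst
    · have hr0 : r = 0 := by simpa using hδr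
      subst hr0
      have e : g d * M s t ε 1 m 0 = g d ^ 2 * M s t ε 0 m 0 := by unfold M; ring
      have e2 : (g c * g c') * M s t ε 0 m 0 = M s t ε 0 (m + 1) 1 := by
        unfold M; ring
      rw [e, rdd, e2]
      exact M_mem hε (by norm_num) (by norm_num) (by norm_num) hst

lemma mem_nm_iff {q : MvPolynomial Var ℤ ⧸ relIdeal} :
    q ∈ normalMonomials ↔ ∃ s t m ε δ r : ℕ, ε ≤ 1 ∧ δ ≤ 1 ∧ r ≤ 2 ∧
      δ * r = 0 ∧ s * t = 0 ∧ q = M s t ε δ m r := by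
  unfold normalMonomials M
  simp [g, map_mul, map_pow]

lemma mul_g_mem (v : Var) {q : MvPolynomial Var ℤ ⧸ relIdeal}
    (hq : q ∈ Submodule.span ℤ normalMonomials) :
    g v * q ∈ Submodule.span ℤ normalMonomials := by
  induction hq using Submodule.span_induction with
  | mem x hx =>
    obtain ⟨s, t, m, ε, δ, r, hε, hδ, hr, hδr, hst, rfl⟩ := mem_nm_iff.mp hx
    exact Submodule.subset_span (key v hε hδ hr hδr hst)
  | zero => simp
  | add x y _ _ hx hy => rw [mul_add]; exact Submodule.add_mem _ hx hy
  | smul a x _ hx => rw [mul_smul_comm]; exact Submodule.smul_mem _ a hx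

/-- The normal-form monomials span the quotient ring as a `ℤ`-module. -/
theorem normalMonomials_span :
    Submodule.span ℤ normalMonomials = ⊤ := by
  rw [eq_top_iff]
  rintro q -
  obtain ⟨p, rfl⟩ := Ideal.Quotient.mk_surjective q
  induction p using MvPolynomial.induction_on with
  | C a =>
    have h1 : (M 0 0 0 0 0 0 : MvPolynomial Var ℤ ⧸ relIdeal) ∈ normalMonomials :=
      M_mem (by norm_num) (by norm_num) (by norm_num) (by norm_num) (by norm_num)
    have h1' : (1 : MvPolynomial Var ℤ ⧸ relIdeal) ∈ normalMonomials := by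
      simpa [M] using h1
    have : Ideal.Quotient.mk relIdeal (C a : MvPolynomial Var ℤ)
        = a • (1 : MvPolynomial Var ℤ ⧸ relIdeal) := by
      simp [Algebra.smul_def]
    rw [this]
    exact Submodule.smul_mem _ a (Submodule.subset_span h1')
  | add p q hp hq =>
    rw [map_add]
    exact Submodule.add_mem _ hp hq
  | mul_X p v hp =>
    have e : Ideal.Quotient.mk relIdeal (p * X v)
        = g v * Ideal.Quotient.mk relIdeal p := by
      rw [map_mul, mul_comm]; rfl
    rw [e]
    exact mul_g_mem v hp
end
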